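/- arXiv:2204.06968 — 2 statements merged into one kernel-verified Lean document; each statement's English description precedes it below -/
import Mathlib

section
/- Let 𝔽 be a field of characteristic zero and p, q ∈ 𝔽[x_1,…,x_n]. Let c_α(a) ∈ S_{p,q}, let k ∈ ℕ with k ≥ 2, and let r, s ∈ 𝔽^n. If H^1(c_β)(r) = H^1(c_β)(s) for all β ∈ ℕ^n with β ≥ α and |β| = |α| + k − 1 (and c_β ∈ S_{p,q}), then H^k(c_α)(r) = H^k(c_α)(s). -/
open MvPolynomial

noncomputable section

variable {F : Type*} [Field F] [CharZero F] {n : ℕ}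

/-- `p(x+a) - q(x)` as a polynomial in the variables `x` with coefficients in `F[a]`. -/
def shiftDiff (p q : MvPolynomial (Fin n) F) :
    MvPolynomial (Fin n) (MvPolynomial (Fin n) F) :=
  aeval (fun i => X i + C (X i)) p - map C q

/-!
Write `g = H^k(c_α)` and `t = r - s`. For `δ ≠ 0` the coefficient of `a^δ` in `c_γ` is
`(γ + δ choose γ) p_{γ+δ}`. From this, the coefficient of `a^ε`, `|ε| = k - 1`, in the
directional derivative `∑ tᵢ ∂g/∂aᵢ` is `(α + ε choose α) H^1(c_{α+ε})(t)`, which vanishes by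
hypothesis because `H^1` is linear. So `g` is constant on the line through `s` in direction `t`;
in characteristic zero this gives `g(r) = g(s)`.
-/

open Finsupp (single)

theorem Nat.ite_choose_add_ite_choose (a b : ℕ) :
    ((if a ≠ 0 then (a - 1 + b).choose (a - 1) else 0) +
      if b ≠ 0 then (a + (b - 1)).choose a else 0) =
      if a + b ≠ 0 then (a + b).choose a else 0 := by
  rcases a with _ | a <;> rcases b with _ | b <;>
    simp [Nat.choose_succ_succ', ← add_assoc, add_right_comm _ 1]

namespace Finsupp

variable {σ : Type*} [Fintype σ]

def multiChoose (γ δ : σ →₀ ℕ) : ℕ := ∏ j, (γ j + δ j).choose (γ j)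

theorem multiChoose_eq_mul_prod_erase [DecidableEq σ] {γ δ γ' δ' : σ →₀ ℕ} (j : σ)
    (hγ : ∀ i ≠ j, γ' i = γ i) (hδ : ∀ i ≠ j, δ' i = δ i) :
    multiChoose γ' δ' =
      (γ' j + δ' j).choose (γ' j) * ∏ i ∈ Finset.univ.erase j, (γ i + δ i).choose (γ i) := by
  rw [multiChoose, ← Finset.mul_prod_erase _ _ (Finset.mem_univ j)]
  congr 1
  refine Finset.prod_congr rfl fun i hi => ?_
  rw [hγ i (Finset.ne_of_mem_erase hi), hδ i (Finset.ne_of_mem_erase hi)]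

theorem multiChoose_pascal [DecidableEq σ] (γ δ : σ →₀ ℕ) (j : σ) :
    ((if γ j ≠ 0 then multiChoose (γ - single j 1) δ else 0) +
      if δ j ≠ 0 then multiChoose γ (δ - single j 1) else 0) =
      if γ j + δ j ≠ 0 then multiChoose γ δ else 0 := by
  have hoff (ε : σ →₀ ℕ) : ∀ i ≠ j, (ε - single j 1 : σ →₀ ℕ) i = ε i := fun i hi => by
    simp [single_eq_of_ne hi]
  rw [multiChoose_eq_mul_prod_erase j (hoff γ) fun _ _ => rfl,
    multiChoose_eq_mul_prod_erase j (fun _ _ => rfl) (hoff δ),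
    multiChoose_eq_mul_prod_erase j (fun _ _ => rfl) fun _ _ => rfl,
    ← ite_zero_mul, ← ite_zero_mul, ← ite_zero_mul, ← add_mul]
  simp only [tsub_apply, single_eq_same, Nat.ite_choose_add_ite_choose]

theorem multiChoose_single_right [DecidableEq σ] (β : σ →₀ ℕ) (i : σ) :
    multiChoose β (single i 1) = β i + 1 := by
  rw [multiChoose_eq_mul_prod_erase (δ := 0) i (fun _ _ => rfl) fun j hj => single_eq_of_ne hj]
  simp

theorem succ_mul_multiChoose_add_single [DecidableEq σ] (α ε : σ →₀ ℕ) (i : σ) :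
    (ε i + 1) * multiChoose α (ε + single i 1) = multiChoose α ε * (α i + ε i + 1) := by
  rw [multiChoose_eq_mul_prod_erase (δ := ε) i (fun _ _ => rfl) fun j hj => by
      simp [single_eq_of_ne hj],
    multiChoose_eq_mul_prod_erase i (fun _ _ => rfl) fun _ _ => rfl]
  have hi := Nat.choose_mul_succ_eq (α i + ε i) (α i)
  rw [show α i + ε i + 1 - α i = ε i + 1 by omega] at hi
  simp only [add_apply, single_eq_same, ← add_assoc]
  rw [← mul_assoc, mul_comm (ε i + 1), ← hi]
  ring

end Finsupp

namespace MvPolynomial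

open Finsupp (multiChoose)

variable {σ R : Type*} [CommSemiring R]

def shiftByVars : MvPolynomial σ R →ₐ[R] MvPolynomial σ (MvPolynomial σ R) :=
  aeval fun i => X i + C (X i)

theorem coeff_coeff_shiftByVars [Fintype σ] (p : MvPolynomial σ R) (γ δ : σ →₀ ℕ) :
    coeff δ (coeff γ (shiftByVars p)) = multiChoose γ δ * coeff (γ + δ) p := by
  classical
  induction p using MvPolynomial.induction_on generalizing γ δ with
  | C a =>
    simp only [shiftByVars, aeval_C, algebraMap_apply, algebraMap_eq, coeff_C,
      apply_ite (coeff δ), coeff_zero]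
    by_cases hγ : γ = 0 <;> by_cases hδ : δ = 0 <;> simp [hγ, hδ, multiChoose, eq_comm]
  | add p q hp hq => simp only [map_add, coeff_add, hp, hq, mul_add]
  | mul_X f j ih =>
    -- multiplying by `X j + C (X j)` raises either `γ` or `δ` at `j`: Pascal's rule
    rw [map_mul, show shiftByVars (X j : MvPolynomial σ R) = X j + C (X j) from aeval_X _ _,
      mul_add, mul_comm _ (C _), coeff_add, coeff_C_mul, coeff_add, coeff_mul_X', coeff_X_mul',
      coeff_mul_X']
    simp only [apply_ite (coeff δ), coeff_zero, ih, Finsupp.mem_support_iff]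
    have reindex {c : Prop} [Decidable c] (m : R) (a : σ →₀ ℕ)
        (ha : c → a = γ + δ - single j 1) :
        (if c then m * coeff a f else 0) = (if c then m else 0) * coeff (γ + δ - single j 1) f := by
      split_ifs with h
      · rw [ha h]
      · rw [zero_mul]
    have one_le {m : σ →₀ ℕ} (h : m j ≠ 0) : single j 1 ≤ m :=
      Finsupp.single_le_iff.2 (Nat.one_le_iff_ne_zero.2 h)
    rw [reindex _ _ fun h => tsub_add_eq_add_tsub (one_le h),
      reindex _ _ fun h => (add_tsub_assoc_of_le (one_le h) γ).symm,
      ← add_mul, mul_ite_zero, ← ite_zero_mul, Finsupp.add_apply]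
    have hP := congrArg (Nat.cast (R := R)) (Finsupp.multiChoose_pascal γ δ j)
    push_cast at hP
    rw [hP]

theorem homogeneousComponent_one_eq_sum [Fintype σ] (f : MvPolynomial σ R) :
    homogeneousComponent 1 f = ∑ i, C (coeff (single i 1) f) * X i := by
  classical
  ext d
  simp only [coeff_homogeneousComponent, coeff_sum, coeff_C_mul, coeff_X, mul_ite, mul_one,
    mul_zero]
  by_cases hd : d.degree = 1
  · obtain ⟨i, rfl⟩ := (Finsupp.sum_eq_one_iff d).1 hd
    simp [Finsupp.single_left_inj]
  · rw [if_neg hd, Finset.sum_eq_zero]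
    rintro i -
    rw [if_neg]
    rintro rfl
    exact hd (Finsupp.degree_single i 1)

theorem eval_homogeneousComponent_one [Fintype σ] (v : σ → R) (f : MvPolynomial σ R) :
    eval v (homogeneousComponent 1 f) = ∑ i, coeff (single i 1) f * v i := by
  simp [homogeneousComponent_one_eq_sum]

theorem eval_sub_homogeneousComponent_one {R : Type*} [CommRing R] [Fintype σ] (r s : σ → R)
    (f : MvPolynomial σ R) :
    eval (r - s) (homogeneousComponent 1 f) =
      eval r (homogeneousComponent 1 f) - eval s (homogeneousComponent 1 f) := by
  simp only [eval_homogeneousComponent_one, Pi.sub_apply, mul_sub, Finset.sum_sub_distrib]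

theorem derivative_aeval [Fintype σ] (ℓ : σ → Polynomial R) (f : MvPolynomial σ R) :
    Polynomial.derivative (aeval ℓ f) =
      ∑ i, aeval ℓ (pderiv i f) * Polynomial.derivative (ℓ i) := by
  classical
  induction f using MvPolynomial.induction_on with
  | C a => simp
  | add f g hf hg => simp only [map_add, hf, hg, add_mul, Finset.sum_add_distrib]
  | mul_X f j hf =>
    simp only [map_mul, Derivation.leibniz, pderiv_X, smul_eq_mul, map_add, aeval_X,
      Polynomial.derivative_mul, hf, add_mul, Finset.sum_add_distrib, Finset.sum_mul]
    simp only [add_comm, Pi.single_apply, MonoidWithZeroHom.map_ite_one_zero, mul_ite, mul_one,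
      mul_zero, ite_mul, zero_mul, Finset.sum_ite_eq, Finset.mem_univ, ↓reduceIte]
    exact congrArg _ (Finset.sum_congr rfl fun i _ => by ring)

theorem eval_add_eq_of_sum_smul_pderiv_eq_zero [Fintype σ] [IsAddTorsionFree R]
    {g : MvPolynomial σ R} (s t : σ → R) (hg : ∑ i, t i • pderiv i g = 0) :
    eval (s + t) g = eval s g := by
  set ℓ : σ → Polynomial R := fun i => Polynomial.C (s i) + Polynomial.C (t i) * Polynomial.X
  have hline (u : R) (f : MvPolynomial σ R) :
      Polynomial.eval u (aeval ℓ f) = eval (s + u • t) f := by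
    induction f using MvPolynomial.induction_on with
    | C a => simp
    | add f f' hf hf' => simp only [map_add, Polynomial.eval_add, hf, hf']
    | mul_X f j hf => simp [hf, ℓ, mul_comm (t j)]
  have hconst : Polynomial.derivative (aeval ℓ g) = 0 := by
    simp only [derivative_aeval, ℓ, Polynomial.derivative_add, Polynomial.derivative_C, zero_add,
      Polynomial.derivative_C_mul_X]
    simp_rw [mul_comm _ (Polynomial.C _), ← Polynomial.smul_eq_C_mul, ← map_smul, ← map_sum, hg,
      map_zero]
  have h := congrArg (Polynomial.eval 1) (Polynomial.eq_C_of_derivative_eq_zero hconst)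
  rwa [Polynomial.eval_C, Polynomial.coeff_zero_eq_eval_zero, hline, hline, one_smul, zero_smul,
    add_zero] at h

end MvPolynomial

omit [CharZero F] in
theorem coeff_coeff_shiftDiff (p q : MvPolynomial (Fin n) F) (γ : Fin n →₀ ℕ)
    {δ : Fin n →₀ ℕ} (hδ : δ ≠ 0) :
    coeff δ (coeff γ (shiftDiff p q)) = Finsupp.multiChoose γ δ * coeff (γ + δ) p := by
  rw [shiftDiff, ← shiftByVars, coeff_sub, coeff_map, coeff_sub, coeff_C_of_ne_zero hδ, sub_zero,
    coeff_coeff_shiftByVars]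

omit [CharZero F] in
theorem coeff_sum_smul_pderiv_homogeneousComponent_shiftDiff (p q : MvPolynomial (Fin n) F)
    (α ε : Fin n →₀ ℕ) (k : ℕ) (t : Fin n → F) :
    coeff ε (∑ i, t i • pderiv i (homogeneousComponent k (coeff α (shiftDiff p q)))) =
      if ε.degree + 1 = k then
        Finsupp.multiChoose α ε * eval t (homogeneousComponent 1 (coeff (α + ε) (shiftDiff p q)))
      else 0 := by
  simp only [coeff_sum, coeff_smul, coeff_pderiv, coeff_homogeneousComponent, map_add,
    Finsupp.degree_single, eval_homogeneousComponent_one]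
  split_ifs with hε
  · rw [Finset.mul_sum]
    refine Finset.sum_congr rfl fun i _ => ?_
    rw [coeff_coeff_shiftDiff _ _ _ (by simp), coeff_coeff_shiftDiff _ _ _ (by simp), add_assoc,
      Finsupp.multiChoose_single_right]
    have hM := congrArg (Nat.cast (R := F)) (Finsupp.succ_mul_multiChoose_add_single α ε i)
    push_cast at hM
    simp only [Finsupp.add_apply, smul_eq_mul]
    push_cast
    linear_combination (t i * coeff (α + (ε + single i 1)) p) * hM
  · simp

theorem homogeneousComponent_eval_eq_general (p q : MvPolynomial (Fin n) F)
    (α : Fin n →₀ ℕ) (k : ℕ) (r s : Fin n → F)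
    (h : ∀ β ∈ (shiftDiff p q).support, α ≤ β →
        (β.sum fun _ e => e) + 1 = (α.sum fun _ e => e) + k →
        eval r (homogeneousComponent 1 (coeff β (shiftDiff p q))) =
          eval s (homogeneousComponent 1 (coeff β (shiftDiff p q)))) :
    eval r (homogeneousComponent k (coeff α (shiftDiff p q))) =
      eval s (homogeneousComponent k (coeff α (shiftDiff p q))) := by
  have hD : ∑ i, (r - s) i • pderiv i (homogeneousComponent k (coeff α (shiftDiff p q))) = 0 := by
    ext ε
    rw [coeff_sum_smul_pderiv_homogeneousComponent_shiftDiff, coeff_zero]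
    split_ifs with hε
    · by_cases hβ : α + ε ∈ (shiftDiff p q).support
      · have hdeg : (α + ε).degree + 1 = α.degree + k := by rw [map_add]; omega
        rw [eval_sub_homogeneousComponent_one, h _ hβ le_self_add hdeg, sub_self, mul_zero]
      · rw [notMem_support_iff.1 hβ, map_zero, map_zero, mul_zero]
    · rfl
  simpa using eval_add_eq_of_sum_smul_pderiv_eq_zero s (r - s) hD

/-- Let `c_α ∈ S_{p,q}`, `k ≥ 2` and `r, s ∈ F^n`. If the degree-one
homogeneous components of all `c_β ∈ S_{p,q}` with `β ≥ α` and `|β| = |α| + k - 1` take the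
same value at `r` and at `s`, then so does the degree-`k` homogeneous component of `c_α`. -/
theorem homogeneousComponent_eval_eq (p q : MvPolynomial (Fin n) F)
    (α : Fin n →₀ ℕ) (hα : α ∈ (shiftDiff p q).support)
    (k : ℕ) (hk : 2 ≤ k) (r s : Fin n → F)
    (h : ∀ β ∈ (shiftDiff p q).support, α ≤ β →
        (β.sum fun _ e => e) + 1 = (α.sum fun _ e => e) + k →
        eval r (homogeneousComponent 1 (coeff β (shiftDiff p q))) =
          eval s (homogeneousComponent 1 (coeff β (shiftDiff p q)))) :
    eval r (homogeneousComponent k (coeff α (shiftDiff p q))) =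
      eval s (homogeneousComponent k (coeff α (shiftDiff p q))) :=
  homogeneousComponent_eval_eq_general p q α k r s h

end
end

section
/- Let 𝔽 be a field of characteristic zero, p, q ∈ 𝔽[x_1,…,x_n], and let {S_0, S_1, …, S_m} be an admissible cover of S_{p,q}. Let ℓ ∈ {0,1,…,m} and suppose r, s ∈ V_𝔽(S_0 ∪ ⋯ ∪ S_{ℓ−1}). Then for every c_α(a) ∈ S_0 ∪ ⋯ ∪ S_ℓ one has L_{a=r}(c_α)(a) = L_{a=s}(c_α)(a) as polynomials in a; in particular, c_α(r) = L_{a=s}(c_α)(r). -/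
/-!
Write `p_w(x) = p(x + w)`, so that `c_α(w)` is the `x^α`-coefficient of `p_w - q`, and
`p_{v+w}(x) = p_w(x + v)`. If `r` and `s` kill every `c_β` with `β > α`, then `p_r - p_s` has no
monomial above `x^α`, and translating a polynomial does not change a coefficient that has nothing
above it. Hence `c_α(v + r) - c_α(v + s) = c_α(r) - c_α(s) =: κ` for all `v`, i.e. `c_α` grows by
`κ` along every step `r - s`. The polynomial `t ↦ c_α(t (r - s))` therefore agrees with
`c_α(0) + κ t` at every natural number, so in characteristic zero its linear coefficient
`H¹(c_α)(r - s)` equals `κ`, which is exactly the equality of the two linearizations. Members of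
`S_0` have degree at most one and are their own linearizations.
-/

open MvPolynomial

noncomputable section

variable {F : Type*} [Field F] [CharZero F] {n : ℕ}

/-- The set `S_{p,q} ⊆ F[a]` of coefficients of `p(x+a) - q(x)` with respect to `x`. -/
def coeffSet (p q : MvPolynomial (Fin n) F) : Set (MvPolynomial (Fin n) F) :=
  {c | ∃ α ∈ (shiftDiff p q).support, c = coeff α (shiftDiff p q)}

/-- The zero set `V_F(P)` of a set of polynomials `P ⊆ F[a]`. -/
def zeroSet (P : Set (MvPolynomial (Fin n) F)) : Set (Fin n → F) :=
  {s | ∀ f ∈ P, eval s f = 0}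

/-- The linearization `L_{a=s}(f) = H^0(f) + H^1(f) + ∑_{i≥2} H^i(f)(s)`. -/
def linearize (s : Fin n → F) (f : MvPolynomial (Fin n) F) : MvPolynomial (Fin n) F :=
  homogeneousComponent 0 f + homogeneousComponent 1 f +
    C (∑ i ∈ Finset.Icc 2 f.totalDegree, eval s (homogeneousComponent i f))

/-- `{S 0, …, S m}` is an admissible cover of `S_{p,q}`:
the sets cover `S_{p,q}`, all members of `S 0` have total degree at most one in `a`,
and whenever `c_α ∈ S ℓ` (`1 ≤ ℓ ≤ m`) and `β > α` with `x^β` occurring in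
`p(x+a) - q(x)`, then `c_β ∈ S 0 ∪ ⋯ ∪ S (ℓ-1)`. -/
def IsAdmissibleCover (p q : MvPolynomial (Fin n) F) (m : ℕ)
    (S : ℕ → Set (MvPolynomial (Fin n) F)) : Prop :=
  (⋃ i ∈ Finset.range (m + 1), S i) = coeffSet p q ∧
  (∀ c ∈ S 0, c.totalDegree ≤ 1) ∧
  (∀ ℓ, 1 ≤ ℓ → ℓ ≤ m → ∀ α ∈ (shiftDiff p q).support,
      coeff α (shiftDiff p q) ∈ S ℓ →
      ∀ β ∈ (shiftDiff p q).support, α < β →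
        coeff β (shiftDiff p q) ∈ ⋃ i ∈ Finset.range ℓ, S i)


namespace MvPolynomial

section CommSemiring

variable {σ R : Type*} [CommSemiring R]

def taylor (v : σ → R) : MvPolynomial σ R →ₐ[R] MvPolynomial σ R :=
  aeval fun i => X i + C (v i)

@[simp]
lemma taylor_X (v : σ → R) (i : σ) : taylor v (X i) = X i + C (v i) :=
  aeval_X _ _

lemma taylor_taylor (v w : σ → R) (f : MvPolynomial σ R) :
    taylor v (taylor w f) = taylor (v + w) f := by
  rw [taylor, taylor, comp_aeval_apply]
  congr 1
  ext1 i
  simp [taylor, add_assoc]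

lemma le_add_of_mem_support_mul {f g : MvPolynomial σ R} {d e : σ →₀ ℕ}
    (hf : ∀ β ∈ f.support, β ≤ d) (hg : ∀ β ∈ g.support, β ≤ e) :
    ∀ β ∈ (f * g).support, β ≤ d + e := by
  classical
  intro β hβ
  obtain ⟨β₁, h₁, β₂, h₂, rfl⟩ := Finset.mem_add.mp (support_mul f g hβ)
  exact add_le_add (hf β₁ h₁) (hg β₂ h₂)

lemma coeff_mul_add_of_forall_le {f g : MvPolynomial σ R} {d e : σ →₀ ℕ}
    (hf : ∀ β ∈ f.support, β ≤ d) (hg : ∀ β ∈ g.support, β ≤ e) :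
    coeff (d + e) (f * g) = coeff d f * coeff e g := by
  classical
  rw [coeff_mul, Finset.sum_eq_single (d, e) _ (by simp)]
  rintro ⟨β₁, β₂⟩ hβ hne
  by_cases h₁ : β₁ ∈ f.support
  · by_cases h₂ : β₂ ∈ g.support
    · exact absurd (Prod.ext_iff.mpr <| (add_eq_add_iff_eq_and_eq (hf _ h₁) (hg _ h₂)).mp
        (Finset.HasAntidiagonal.mem_antidiagonal.mp hβ)) hne
    · rw [notMem_support_iff.mp h₂, mul_zero]
  · rw [notMem_support_iff.mp h₁, zero_mul]

def HasTopMonomial (f : MvPolynomial σ R) (d : σ →₀ ℕ) : Prop :=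
  (∀ β ∈ f.support, β ≤ d) ∧ coeff d f = 1

lemma HasTopMonomial.mul {f g : MvPolynomial σ R} {d e : σ →₀ ℕ}
    (hf : HasTopMonomial f d) (hg : HasTopMonomial g e) : HasTopMonomial (f * g) (d + e) :=
  ⟨le_add_of_mem_support_mul hf.1 hg.1,
    by rw [coeff_mul_add_of_forall_le hf.1 hg.1, hf.2, hg.2, one_mul]⟩

lemma hasTopMonomial_one : HasTopMonomial (1 : MvPolynomial σ R) 0 := by
  classical
  refine ⟨fun β hβ => ?_, coeff_zero_one⟩
  rw [mem_support_iff, coeff_one] at hβ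
  simp_all

lemma hasTopMonomial_X_add_C (i : σ) (c : R) :
    HasTopMonomial (X i + C c : MvPolynomial σ R) (Finsupp.single i 1) := by
  classical
  refine ⟨fun β hβ => ?_, ?_⟩
  · rw [mem_support_iff, coeff_add, coeff_X, coeff_C] at hβ
    split_ifs at hβ with h₁ h₂ h₂
    · exact h₁ ▸ le_rfl
    · exact h₁ ▸ le_rfl
    · exact h₂ ▸ zero_le
    · simp at hβ
  · rw [coeff_add, coeff_X_same, coeff_C, if_neg (Finsupp.single_ne_zero.mpr one_ne_zero).symm,
      add_zero]

lemma HasTopMonomial.pow {f : MvPolynomial σ R} {d : σ →₀ ℕ} (hf : HasTopMonomial f d) (k : ℕ) :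
    HasTopMonomial (f ^ k) (k • d) := by
  induction k with
  | zero => simpa using hasTopMonomial_one
  | succ k ih => simpa [pow_succ, succ_nsmul] using ih.mul hf

lemma hasTopMonomial_taylor_monomial (v : σ → R) (γ : σ →₀ ℕ) :
    HasTopMonomial (taylor v (monomial γ 1)) γ := by
  induction γ using Finsupp.induction with
  | zero => simpa using hasTopMonomial_one
  | single_add i k γ _ _ ih =>
    rw [monomial_single_add, map_mul, map_pow]
    simpa using ((hasTopMonomial_X_add_C i (v i)).pow k).mul ih

lemma coeff_taylor_of_forall_lt {f : MvPolynomial σ R} {α : σ →₀ ℕ}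
    (h : ∀ β, α < β → coeff β f = 0) (v : σ → R) : coeff α (taylor v f) = coeff α f := by
  classical
  have hmon : ∀ γ, coeff α (taylor v (monomial γ (coeff γ f))) =
      coeff γ f * coeff α (taylor v (monomial γ 1)) := fun γ => by
    rw [← smul_eq_mul, ← coeff_smul, ← map_smul, smul_monomial, smul_eq_mul, mul_one]
  conv_lhs => rw [f.as_sum]
  rw [map_sum, coeff_sum, Finset.sum_eq_single α]
  · rw [hmon, (hasTopMonomial_taylor_monomial v α).2, mul_one]
  · intro γ _ hγα
    rw [hmon]
    by_cases hαγ : α ≤ γ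
    · rw [h γ (lt_of_le_of_ne hαγ (Ne.symm hγα)), zero_mul]
    · rw [notMem_support_iff.mp fun hα => hαγ ((hasTopMonomial_taylor_monomial v γ).1 α hα),
        mul_zero]
  · intro hα
    rw [notMem_support_iff.mp hα, monomial_zero, map_zero, coeff_zero]

lemma coeff_aeval_C_mul_X (u : σ → R) (f : MvPolynomial σ R) (k : ℕ) :
    (aeval (fun i => Polynomial.C (u i) * Polynomial.X) f).coeff k =
      eval u (homogeneousComponent k f) := by
  classical
  induction f using MvPolynomial.induction_on' with
  | monomial d c =>
    rw [homogeneousComponent_of_mem (isHomogeneous_monomial c rfl), aeval_monomial]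
    have : (d.prod fun i k => (Polynomial.C (u i) * Polynomial.X) ^ k) =
        Polynomial.C (d.prod fun i k => u i ^ k) * Polynomial.X ^ d.degree := by
      simp only [Finsupp.prod, mul_pow, Finset.prod_mul_distrib, Finset.prod_pow_eq_pow_sum,
        map_prod, map_pow, Finsupp.degree_apply]
    rw [this, Polynomial.algebraMap_apply, ← mul_assoc, ← Polynomial.C_mul,
      Polynomial.coeff_C_mul_X_pow]
    split_ifs <;> simp [eval_monomial]
  | add f g hf hg => simp [hf, hg]

lemma eval_aeval_C_mul_X (u : σ → R) (f : MvPolynomial σ R) (t : R) :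
    (aeval (fun i => Polynomial.C (u i) * Polynomial.X) f).eval t = eval (t • u) f := by
  have : (fun i => Polynomial.aeval t (Polynomial.C (u i) * Polynomial.X)) = t • u := by
    funext i
    rw [map_mul, Polynomial.aeval_C, Polynomial.aeval_X, Pi.smul_apply, smul_eq_mul, mul_comm,
      Algebra.algebraMap_self, RingHom.id_apply]
  rw [← Polynomial.coe_aeval_eq_eval, comp_aeval_apply, this, aeval_eq_eval]

end CommSemiring

section CommRing

variable {σ R : Type*} [CommRing R]

lemma IsHomogeneous.eval_sub_of_one {φ : MvPolynomial σ R} (hφ : φ.IsHomogeneous 1)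
    (u v : σ → R) : eval (u - v) φ = eval u φ - eval v φ := by
  rw [← mem_homogeneousSubmodule, homogeneousSubmodule_one_eq_span_X] at hφ
  induction hφ using Submodule.span_induction with
  | mem x hx => obtain ⟨i, rfl⟩ := hx; simp
  | zero => simp
  | add x y _ _ hx hy => simp only [map_add, hx, hy]; ring
  | smul a x _ hx => simp only [smul_eval, hx]; ring

lemma sum_Icc_two_homogeneousComponent (c : MvPolynomial σ R) :
    ∑ i ∈ Finset.Icc 2 c.totalDegree, homogeneousComponent i c =
      c - homogeneousComponent 0 c - homogeneousComponent 1 c := by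
  have htail : ∑ i ∈ Finset.Icc 2 c.totalDegree, homogeneousComponent i c =
      ∑ i ∈ Finset.Ico 2 (c.totalDegree + 2), homogeneousComponent i c := by
    refine Finset.sum_subset (fun i hi => ?_) fun i hi hi' => ?_
    · simp only [Finset.mem_Icc, Finset.mem_Ico] at hi ⊢; omega
    · simp only [Finset.mem_Icc, Finset.mem_Ico] at hi hi'
      exact homogeneousComponent_eq_zero i c (by omega)
  have hfull : ∑ i ∈ Finset.range (c.totalDegree + 2), homogeneousComponent i c = c := by
    rw [Finset.sum_range_succ, homogeneousComponent_eq_zero _ c (by omega), add_zero,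
      sum_homogeneousComponent]
  rw [← Finset.sum_range_add_sum_Ico _ (by omega : 2 ≤ c.totalDegree + 2),
    Finset.sum_range_succ, Finset.sum_range_one] at hfull
  rw [htail]
  linear_combination hfull

end CommRing

lemma eval_homogeneousComponent_one_of_forall_eval_add {σ K : Type*} [Field K] [CharZero K]
    {f : MvPolynomial σ K} {u : σ → K} {κ : K} (h : ∀ v, eval (v + u) f = eval v f + κ) :
    eval u (homogeneousComponent 1 f) = κ := by
  have hmul : ∀ m : ℕ, eval ((m : K) • u) f = eval 0 f + m * κ := by
    intro m
    induction m with
    | zero => simp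
    | succ m ih => rw [Nat.cast_succ, add_smul, one_smul, h, ih]; ring
  have hline : aeval (fun i => Polynomial.C (u i) * Polynomial.X) f =
      Polynomial.C (eval 0 f) + Polynomial.C κ * Polynomial.X := by
    refine Polynomial.eq_of_infinite_eval_eq _ _
      (Set.infinite_of_injective_forall_mem Nat.cast_injective fun m : ℕ => ?_)
    rw [Set.mem_ofPred_eq, eval_aeval_C_mul_X, hmul, Polynomial.eval_add, Polynomial.eval_mul,
      Polynomial.eval_C, Polynomial.eval_C, Polynomial.eval_X, mul_comm]
  rw [← coeff_aeval_C_mul_X, hline]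
  simp

end MvPolynomial

section

variable {K : Type*} [Field K]

lemma linearize_eq (w : Fin n → K) (c : MvPolynomial (Fin n) K) :
    linearize w c = homogeneousComponent 0 c + homogeneousComponent 1 c +
      C (eval w c - eval w (homogeneousComponent 0 c) - eval w (homogeneousComponent 1 c)) := by
  rw [linearize, ← map_sum, sum_Icc_two_homogeneousComponent, map_sub (eval w), map_sub (eval w)]

lemma eval_linearize_self (w : Fin n → K) (c : MvPolynomial (Fin n) K) :
    eval w (linearize w c) = eval w c := by
  rw [linearize_eq, map_add, map_add, eval_C]
  ring

lemma linearize_eq_self_of_totalDegree_le_one (w : Fin n → K) {c : MvPolynomial (Fin n) K}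
    (hc : c.totalDegree ≤ 1) : linearize w c = c := by
  have h := sum_Icc_two_homogeneousComponent c
  rw [Finset.Icc_eq_empty (by omega), Finset.sum_empty, eq_comm, sub_sub, sub_eq_zero] at h
  rw [linearize, Finset.Icc_eq_empty (by omega), Finset.sum_empty, map_zero, add_zero, ← h]

lemma linearize_eq_linearize_of_eval_sub {r s : Fin n → K} {c : MvPolynomial (Fin n) K}
    (h : eval r c - eval s c =
      eval r (homogeneousComponent 1 c) - eval s (homogeneousComponent 1 c)) :
    linearize r c = linearize s c := by
  rw [linearize_eq, linearize_eq, homogeneousComponent_zero, eval_C, eval_C]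
  congr 2
  linear_combination h

lemma map_eval_shiftDiff (w : Fin n → K) (p q : MvPolynomial (Fin n) K) :
    map (eval w) (shiftDiff p q) = taylor w p - q := by
  rw [shiftDiff, map_sub, map_map, show (eval w).comp C = RingHom.id K from RingHom.ext (eval_C ·),
    map_id]
  congr 1
  induction p using MvPolynomial.induction_on <;> simp_all [taylor]

lemma eval_coeff_shiftDiff (w : Fin n → K) (p q : MvPolynomial (Fin n) K) (β : Fin n →₀ ℕ) :
    eval w (coeff β (shiftDiff p q)) = coeff β (taylor w p) - coeff β q := by
  rw [← coeff_map, map_eval_shiftDiff, coeff_sub]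

lemma eval_add_sub_eval_add_coeff_shiftDiff {p q : MvPolynomial (Fin n) K} {α : Fin n →₀ ℕ}
    {r s : Fin n → K}
    (hvan : ∀ β, α < β →
      eval r (coeff β (shiftDiff p q)) = 0 ∧ eval s (coeff β (shiftDiff p q)) = 0)
    (v : Fin n → K) :
    eval (v + r) (coeff α (shiftDiff p q)) - eval (v + s) (coeff α (shiftDiff p q)) =
      eval r (coeff α (shiftDiff p q)) - eval s (coeff α (shiftDiff p q)) := by
  have hdiff : ∀ β, α < β → coeff β (taylor r p - taylor s p) = 0 := fun β hβ => by
    obtain ⟨hr, hs⟩ := hvan β hβ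
    rw [eval_coeff_shiftDiff] at hr hs
    rw [coeff_sub]
    linear_combination hr - hs
  have key := coeff_taylor_of_forall_lt hdiff v
  rw [map_sub, coeff_sub, coeff_sub] at key
  simp only [eval_coeff_shiftDiff, ← taylor_taylor]
  linear_combination key

end

lemma linearize_coeff_shiftDiff_eq {p q : MvPolynomial (Fin n) F} {α : Fin n →₀ ℕ}
    {r s : Fin n → F}
    (hvan : ∀ β, α < β →
      eval r (coeff β (shiftDiff p q)) = 0 ∧ eval s (coeff β (shiftDiff p q)) = 0) :
    linearize r (coeff α (shiftDiff p q)) = linearize s (coeff α (shiftDiff p q)) := by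
  set c := coeff α (shiftDiff p q)
  have hperiodic : ∀ v, eval (v + (r - s)) c = eval v c + (eval r c - eval s c) := fun v => by
    have := eval_add_sub_eval_add_coeff_shiftDiff hvan (v - s)
    rw [sub_add_cancel, sub_add_eq_add_sub, add_sub_assoc] at this
    linear_combination this
  apply linearize_eq_linearize_of_eval_sub
  rw [← (homogeneousComponent_isHomogeneous 1 c).eval_sub_of_one,
    eval_homogeneousComponent_one_of_forall_eval_add hperiodic]

/-- For an admissible cover `{S 0, …, S m}` of `S_{p,q}`, if
`r, s ∈ V_F(S 0 ∪ ⋯ ∪ S (ℓ-1))` then for every `c ∈ S 0 ∪ ⋯ ∪ S ℓ` the linearizations of `c`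
at `r` and at `s` agree as polynomials; in particular `c(r) = L_{a=s}(c)(r)`. -/
theorem linearize_eq_of_mem_zeroSet (p q : MvPolynomial (Fin n) F) (m : ℕ)
    (S : ℕ → Set (MvPolynomial (Fin n) F))
    (hS : IsAdmissibleCover p q m S)
    (ℓ : ℕ) (hℓ : ℓ ≤ m) (r s : Fin n → F)
    (hr : r ∈ zeroSet (⋃ i ∈ Finset.range ℓ, S i))
    (hs : s ∈ zeroSet (⋃ i ∈ Finset.range ℓ, S i)) :
    ∀ c ∈ ⋃ i ∈ Finset.range (ℓ + 1), S i,
      linearize r c = linearize s c ∧ eval r c = eval r (linearize s c) := by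
  obtain ⟨hcover, hdeg, hadm⟩ := hS
  intro c hc
  obtain ⟨i, hi, hci⟩ := Set.mem_iUnion₂.mp hc
  rw [Finset.mem_range] at hi
  suffices hlin : linearize r c = linearize s c from
    ⟨hlin, by rw [← hlin, eval_linearize_self]⟩
  rcases Nat.eq_zero_or_pos i with rfl | hi0
  · rw [linearize_eq_self_of_totalDegree_le_one r (hdeg c hci),
      linearize_eq_self_of_totalDegree_le_one s (hdeg c hci)]
  obtain ⟨α, hα, rfl⟩ : c ∈ coeffSet p q :=
    hcover ▸ Set.mem_biUnion (Finset.mem_range.mpr (by omega)) hci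
  refine linearize_coeff_shiftDiff_eq fun β hαβ => ?_
  by_cases hβ : β ∈ (shiftDiff p q).support
  · have hmem : coeff β (shiftDiff p q) ∈ ⋃ j ∈ Finset.range ℓ, S j :=
      Set.biUnion_mono (Finset.coe_subset.mpr (Finset.range_subset_range.mpr (by omega)))
        (fun _ _ => le_rfl) (hadm i hi0 (by omega) α hα hci β hβ hαβ)
    exact ⟨hr _ hmem, hs _ hmem⟩
  · simp [notMem_support_iff.mp hβ]

end
end
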